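/- Let H be a 3-uniform hypergraph and let M be a matching of maximum size in H. Suppose v₁, …, v₁₀ ∈ V(H) \ V(M) are distinct vertices and E, F ∈ M are distinct edges such that L_{v_i}(EF) is isomorphic to B_{113} for every 1 ≤ i ≤ 10. Then L_{v₁}(EF) = L_{v₂}(EF) = … = L_{v₁₀}(EF). -/
import Mathlib


open Finset

/-- The bipartite graph `B₁₁₃` on vertex classes `Fin 3` and `Fin 3`, with edge set
`{x₀y₀, x₀y₁, x₀y₂, x₁y₀, x₂y₀}` (each class has degree sequence `1,1,3`, and the two
degree-3 vertices `x₀, y₀` are joined by the base edge). -/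
def B113 : Finset (Fin 3 × Fin 3) :=
  Finset.univ.filter fun p => p.1 = 0 ∨ p.2 = 0

/-- The link graph `L_v(EF)` of `v` (the bipartite graph on classes `E` and `F` in which
`a ∈ E` is joined to `b ∈ F` iff `{v,a,b} ∈ H`) is isomorphic to the bipartite graph with
edge set `B` on `Fin 3` and `Fin 3`. -/
def LinkIso {Vt : Type*} [DecidableEq Vt] (H : Finset (Finset Vt)) (v : Vt)
    (E F : Finset Vt) (B : Finset (Fin 3 × Fin 3)) : Prop :=
  ∃ (g : Vt → Fin 3) (h : Vt → Fin 3),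
    Set.BijOn g ↑E Set.univ ∧ Set.BijOn h ↑F Set.univ ∧
    ∀ a ∈ E, ∀ b ∈ F, (({v, a, b} : Finset Vt) ∈ H ↔ (g a, h b) ∈ B)

/-- Two triples with pairwise-distinct cross elements are disjoint. -/
lemma disj3 {Vt} [DecidableEq Vt] {w x y w' x' y' : Vt}
    (h1 : w ≠ w') (h2 : w ≠ x') (h3 : w ≠ y') (h4 : x ≠ w') (h5 : x ≠ x') (h6 : x ≠ y')
    (h7 : y ≠ w') (h8 : y ≠ x') (h9 : y ≠ y') :
    Disjoint ({w,x,y} : Finset Vt) {w',x',y'} := by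
  simp [Finset.disjoint_left]; aesop

set_option maxHeartbeats 1000000 in
/-- The augmenting-matching contradiction: if three pairwise disjoint edges can be built
from three uncovered vertices and the vertices of `E ∪ F`, then `M` was not maximum. -/
lemma aug {Vt : Type} [DecidableEq Vt]
    (H : Finset (Finset Vt))
    (M : Finset (Finset Vt)) (hM : M ⊆ H)
    (hdisj : (M : Set (Finset Vt)).PairwiseDisjoint id)
    (hmax : ∀ M' ⊆ H, (M' : Set (Finset Vt)).PairwiseDisjoint id → M'.card ≤ M.card)
    (E F : Finset Vt) (hE : E ∈ M) (hF : F ∈ M) (hEF : E ≠ F)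
    (w1 w2 w3 : Vt) (hw12 : w1 ≠ w2) (hw13 : w1 ≠ w3) (hw23 : w2 ≠ w3)
    (hwM : ∀ G ∈ M, w1 ∉ G ∧ w2 ∉ G ∧ w3 ∉ G)
    (x1 x2 x3 : Vt) (hx1 : x1 ∈ E) (hx2 : x2 ∈ E) (hx3 : x3 ∈ E)
    (hx12 : x1 ≠ x2) (hx13 : x1 ≠ x3) (hx23 : x2 ≠ x3)
    (y1 y2 y3 : Vt) (hy1 : y1 ∈ F) (hy2 : y2 ∈ F) (hy3 : y3 ∈ F)
    (hy12 : y1 ≠ y2) (hy13 : y1 ≠ y3) (hy23 : y2 ≠ y3)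
    (he1 : ({w1,x1,y1} : Finset Vt) ∈ H) (he2 : ({w2,x2,y2} : Finset Vt) ∈ H)
    (he3 : ({w3,x3,y3} : Finset Vt) ∈ H) :
    False := by
  have hEFd : Disjoint E F := hdisj hE hF hEF
  -- basic non-membership facts
  have hwE : w1 ∉ E ∧ w2 ∉ E ∧ w3 ∉ E := hwM E hE
  have hwF : w1 ∉ F ∧ w2 ∉ F ∧ w3 ∉ F := hwM F hF
  have hxF : x1 ∉ F ∧ x2 ∉ F ∧ x3 ∉ F :=
    ⟨Finset.disjoint_left.mp hEFd hx1, Finset.disjoint_left.mp hEFd hx2,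
     Finset.disjoint_left.mp hEFd hx3⟩
  have hyE : y1 ∉ E ∧ y2 ∉ E ∧ y3 ∉ E :=
    ⟨Finset.disjoint_right.mp hEFd hy1, Finset.disjoint_right.mp hEFd hy2,
     Finset.disjoint_right.mp hEFd hy3⟩
  set e1 : Finset Vt := {w1,x1,y1} with he1def
  set e2 : Finset Vt := {w2,x2,y2} with he2def
  set e3 : Finset Vt := {w3,x3,y3} with he3def
  have D12 : Disjoint e1 e2 := by
    apply disj3 <;> rintro rfl <;> tauto
  have D13 : Disjoint e1 e3 := by
    apply disj3 <;> rintro rfl <;> tauto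
  have D23 : Disjoint e2 e3 := by
    apply disj3 <;> rintro rfl <;> tauto
  have DG : ∀ G ∈ M, G ≠ E → G ≠ F → Disjoint e1 G ∧ Disjoint e2 G ∧ Disjoint e3 G := by
    intro G hG hGE hGF
    have hGEd : Disjoint G E := hdisj hG hE hGE
    have hGFd : Disjoint G F := hdisj hG hF hGF
    have hwG := hwM G hG
    have hxG : x1 ∉ G ∧ x2 ∉ G ∧ x3 ∉ G :=
      ⟨Finset.disjoint_right.mp hGEd hx1, Finset.disjoint_right.mp hGEd hx2,
       Finset.disjoint_right.mp hGEd hx3⟩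
    have hyG : y1 ∉ G ∧ y2 ∉ G ∧ y3 ∉ G :=
      ⟨Finset.disjoint_right.mp hGFd hy1, Finset.disjoint_right.mp hGFd hy2,
       Finset.disjoint_right.mp hGFd hy3⟩
    refine ⟨?_, ?_, ?_⟩ <;>
      · rw [Finset.disjoint_left]
        intro u hu hu'
        simp only [he1def, he2def, he3def, Finset.mem_insert, Finset.mem_singleton] at hu
        rcases hu with rfl | rfl | rfl <;> tauto
  -- the new matching
  set M' : Finset (Finset Vt) := insert e1 (insert e2 (insert e3 (M \ {E, F}))) with hM'def
  have hsub : M' ⊆ H := by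
    intro G hG
    simp only [hM'def, Finset.mem_insert, Finset.mem_sdiff] at hG
    rcases hG with rfl | rfl | rfl | ⟨hGM, _⟩ <;> first | assumption | exact hM hGM
  have hmem : ∀ {G}, G ∈ M' → G = e1 ∨ G = e2 ∨ G = e3 ∨ (G ∈ M ∧ G ≠ E ∧ G ≠ F) := by
    intro G hG
    simp only [hM'def, Finset.mem_insert, Finset.mem_sdiff, Finset.mem_singleton,
      not_or] at hG
    tauto
  have hdisj' : (M' : Set (Finset Vt)).PairwiseDisjoint id := by
    intro A hA B hB hAB
    simp only [Finset.mem_coe] at hA hB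
    have hA' := hmem hA
    have hB' := hmem hB
    simp only [Function.onFun, id]
    rcases hA' with rfl | rfl | rfl | ⟨hAM, hAE, hAF⟩ <;>
      rcases hB' with rfl | rfl | rfl | ⟨hBM, hBE, hBF⟩
    · exact absurd rfl hAB
    · exact D12
    · exact D13
    · exact ((DG _ hBM hBE hBF).1).symm.symm
    · exact D12.symm
    · exact absurd rfl hAB
    · exact D23
    · exact (DG _ hBM hBE hBF).2.1
    · exact D13.symm
    · exact D23.symm
    · exact absurd rfl hAB
    · exact (DG _ hBM hBE hBF).2.2
    · exact ((DG _ hAM hAE hAF).1).symm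
    · exact ((DG _ hAM hAE hAF).2.1).symm
    · exact ((DG _ hAM hAE hAF).2.2).symm
    · exact hdisj hAM hBM hAB
  -- cardinality
  have hw1e2 : w1 ∉ e2 := by
    simp only [he2def, Finset.mem_insert, Finset.mem_singleton]
    push_neg
    exact ⟨hw12, fun h => hwE.1 (by rw [h]; exact hx2), fun h => hwF.1 (by rw [h]; exact hy2)⟩
  have hw1e3 : w1 ∉ e3 := by
    simp only [he3def, Finset.mem_insert, Finset.mem_singleton]
    push_neg
    exact ⟨hw13, fun h => hwE.1 (by rw [h]; exact hx3), fun h => hwF.1 (by rw [h]; exact hy3)⟩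
  have hw2e3 : w2 ∉ e3 := by
    simp only [he3def, Finset.mem_insert, Finset.mem_singleton]
    push_neg
    exact ⟨hw23, fun h => hwE.2.1 (by rw [h]; exact hx3), fun h => hwF.2.1 (by rw [h]; exact hy3)⟩
  have hnotM : ∀ {e : Finset Vt} {w : Vt}, w ∈ e → (∀ G ∈ M, w ∉ G) → e ∉ M \ {E, F} := by
    intro e w hwe hGw he
    exact hGw e (Finset.mem_sdiff.mp he).1 hwe
  have hw1e1 : w1 ∈ e1 := by simp [he1def]
  have hw2e2 : w2 ∈ e2 := by simp [he2def]
  have hw3e3 : w3 ∈ e3 := by simp [he3def]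
  have h1 : e3 ∉ M \ {E, F} := hnotM hw3e3 (fun G hG => (hwM G hG).2.2)
  have h2 : e2 ∉ insert e3 (M \ {E, F}) := by
    simp only [Finset.mem_insert]
    push_neg
    exact ⟨fun h => hw2e3 (h ▸ hw2e2), hnotM hw2e2 (fun G hG => (hwM G hG).2.1)⟩
  have h3 : e1 ∉ insert e2 (insert e3 (M \ {E, F})) := by
    simp only [Finset.mem_insert]
    push_neg
    exact ⟨fun h => hw1e2 (h ▸ hw1e1), fun h => hw1e3 (h ▸ hw1e1),
      hnotM hw1e1 (fun G hG => (hwM G hG).1)⟩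
  have hEFsub : ({E, F} : Finset (Finset Vt)) ⊆ M := by
    intro G hG
    simp only [Finset.mem_insert, Finset.mem_singleton] at hG
    rcases hG with rfl | rfl <;> assumption
  have hEF2 : ({E, F} : Finset (Finset Vt)).card = 2 := by
    rw [Finset.card_insert_of_notMem (by simp [hEF]), Finset.card_singleton]
  have hMcard : (M \ {E, F}).card = M.card - 2 := by
    rw [Finset.card_sdiff_of_subset hEFsub, hEF2]
  have hM2 : 2 ≤ M.card := hEF2 ▸ Finset.card_le_card hEFsub
  have hM'card : M'.card = M.card + 1 := by
    rw [hM'def, Finset.card_insert_of_notMem h3, Finset.card_insert_of_notMem h2,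
      Finset.card_insert_of_notMem h1, hMcard]
    omega
  have := hmax M' hsub hdisj'
  omega

/-- Extraction of the "center" structure from a `B113` isomorphism: there is a vertex
`a ∈ E` joined to all of `F` and a vertex `b ∈ F` joined to all of `E`, and these are
all the edges of the link. -/
lemma center_of_iso {Vt : Type} [DecidableEq Vt] {H : Finset (Finset Vt)} {w : Vt}
    {E F : Finset Vt} (h : LinkIso H w E F B113) :
    ∃ a ∈ E, ∃ b ∈ F, ∀ a' ∈ E, ∀ b' ∈ F,
      (({w, a', b'} : Finset Vt) ∈ H ↔ (a' = a ∨ b' = b)) := by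
  obtain ⟨g, h', hg, hh, hgh⟩ := h
  obtain ⟨a, haE, hga⟩ := hg.2.2 (Set.mem_univ (0 : Fin 3))
  obtain ⟨b, hbF, hhb⟩ := hh.2.2 (Set.mem_univ (0 : Fin 3))
  refine ⟨a, haE, b, hbF, fun a' ha' b' hb' => ?_⟩
  rw [hgh a' ha' b' hb']
  have hB : ((g a', h' b') ∈ B113) ↔ (g a' = 0 ∨ h' b' = 0) := by
    simp [B113]
  rw [hB]
  constructor
  · rintro (h0 | h0)
    · exact Or.inl (hg.2.1 ha' haE (by rw [h0, hga]))
    · exact Or.inr (hh.2.1 hb' hbF (by rw [h0, hhb]))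
  · rintro (rfl | rfl)
    · exact Or.inl hga
    · exact Or.inr hhb

/-- Let `M` be a maximum matching in a 3-uniform hypergraph `H`.
If `v₁, …, v₁₀` are distinct uncovered vertices and `E ≠ F` are edges of `M` such that
each link graph `L_{vᵢ}(EF)` is isomorphic to `B₁₁₃`, then all these link graphs are
equal. -/
theorem stmt_15 (Vt : Type) [DecidableEq Vt]
    (H : Finset (Finset Vt)) (h3 : ∀ e ∈ H, e.card = 3)
    (M : Finset (Finset Vt)) (hM : M ⊆ H)
    (hdisj : (M : Set (Finset Vt)).PairwiseDisjoint id)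
    (hmax : ∀ M' ⊆ H, (M' : Set (Finset Vt)).PairwiseDisjoint id → M'.card ≤ M.card)
    (v : Fin 10 → Vt) (hv : Function.Injective v)
    (hvM : ∀ i, v i ∉ M.biUnion id)
    (E F : Finset Vt) (hE : E ∈ M) (hF : F ∈ M) (hEF : E ≠ F)
    (hiso : ∀ i, LinkIso H (v i) E F B113) :
    ∀ i j : Fin 10, ∀ a ∈ E, ∀ b ∈ F,
      (({v i, a, b} : Finset Vt) ∈ H ↔ ({v j, a, b} : Finset Vt) ∈ H) := by
  have hEc : E.card = 3 := h3 E (hM hE)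
  have hFc : F.card = 3 := h3 F (hM hF)
  have hcen : ∀ i, ∃ a ∈ E, ∃ b ∈ F, ∀ a' ∈ E, ∀ b' ∈ F,
      (({v i, a', b'} : Finset Vt) ∈ H ↔ (a' = a ∨ b' = b)) :=
    fun i => center_of_iso (hiso i)
  choose a ha b hb hP using hcen
  have hvnot : ∀ i, ∀ G ∈ M, v i ∉ G := by
    intro i G hG hvG
    exact hvM i (Finset.mem_biUnion.mpr ⟨G, hG, hvG⟩)
  have key : ∀ i j, a i = a j ∧ b i = b j := by
    intro i j
    by_cases hij : i = j
    · subst hij; exact ⟨rfl, rfl⟩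
    obtain ⟨k, hki, hkj⟩ : ∃ k : Fin 10, k ≠ i ∧ k ≠ j := by
      have h1 : ({i, j} : Finset (Fin 10)).card ≤ 2 :=
        (Finset.card_insert_le _ _).trans (by simp)
      have hpos : 0 < (({i, j} : Finset (Fin 10))ᶜ).card := by
        rw [Finset.card_compl]
        simp only [Fintype.card_fin]
        omega
      obtain ⟨k, hk⟩ := Finset.card_pos.mp hpos
      rw [Finset.mem_compl] at hk
      simp only [Finset.mem_insert, Finset.mem_singleton, not_or] at hk
      exact ⟨k, hk⟩
    have hwMf : ∀ G ∈ M, v i ∉ G ∧ v j ∉ G ∧ v k ∉ G :=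
      fun G hG => ⟨hvnot i G hG, hvnot j G hG, hvnot k G hG⟩
    have hvij : v i ≠ v j := hv.ne hij
    have hvik : v i ≠ v k := hv.ne (Ne.symm hki)
    have hvjk : v j ≠ v k := hv.ne (Ne.symm hkj)
    have keyA : a i = a j := by
      by_contra hne
      obtain ⟨x3, hx3E, hx3i, hx3j⟩ : ∃ x ∈ E, x ≠ a i ∧ x ≠ a j := by
        have hsub : ¬ E ⊆ {a i, a j} := by
          intro hsub
          have hle := Finset.card_le_card hsub
          have h2 : ({a i, a j} : Finset Vt).card ≤ 2 :=
            (Finset.card_insert_le _ _).trans (by simp)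
          omega
        obtain ⟨x, hxE, hx⟩ := Finset.not_subset.mp hsub
        simp only [Finset.mem_insert, Finset.mem_singleton, not_or] at hx
        exact ⟨x, hxE, hx⟩
      obtain ⟨y1, hy1, y2, hy2, hy12⟩ : ∃ y1 ∈ F \ {b k}, ∃ y2 ∈ F \ {b k}, y1 ≠ y2 := by
        apply Finset.one_lt_card.mp
        rw [Finset.card_sdiff_of_subset (by simp [hb k])]
        simp [hFc]
      simp only [Finset.mem_sdiff, Finset.mem_singleton] at hy1 hy2
      exact aug H M hM hdisj hmax E F hE hF hEF (v i) (v j) (v k) hvij hvik hvjk hwMf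
        (a i) (a j) x3 (ha i) (ha j) hx3E hne (Ne.symm hx3i) (Ne.symm hx3j)
        y1 y2 (b k) hy1.1 hy2.1 (hb k) hy12 hy1.2 hy2.2
        ((hP i (a i) (ha i) y1 hy1.1).mpr (Or.inl rfl))
        ((hP j (a j) (ha j) y2 hy2.1).mpr (Or.inl rfl))
        ((hP k x3 hx3E (b k) (hb k)).mpr (Or.inr rfl))
    have keyB : b i = b j := by
      by_contra hne
      obtain ⟨y3, hy3F, hy3i, hy3j⟩ : ∃ y ∈ F, y ≠ b i ∧ y ≠ b j := by
        have hsub : ¬ F ⊆ {b i, b j} := by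
          intro hsub
          have hle := Finset.card_le_card hsub
          have h2 : ({b i, b j} : Finset Vt).card ≤ 2 :=
            (Finset.card_insert_le _ _).trans (by simp)
          omega
        obtain ⟨y, hyF, hy⟩ := Finset.not_subset.mp hsub
        simp only [Finset.mem_insert, Finset.mem_singleton, not_or] at hy
        exact ⟨y, hyF, hy⟩
      obtain ⟨x1, hx1, x2, hx2, hx12⟩ : ∃ x1 ∈ E \ {a k}, ∃ x2 ∈ E \ {a k}, x1 ≠ x2 := by
        apply Finset.one_lt_card.mp
        rw [Finset.card_sdiff_of_subset (by simp [ha k])]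
        simp [hEc]
      simp only [Finset.mem_sdiff, Finset.mem_singleton] at hx1 hx2
      exact aug H M hM hdisj hmax E F hE hF hEF (v i) (v j) (v k) hvij hvik hvjk hwMf
        x1 x2 (a k) hx1.1 hx2.1 (ha k) hx12 hx1.2 hx2.2
        (b i) (b j) y3 (hb i) (hb j) hy3F hne (Ne.symm hy3i) (Ne.symm hy3j)
        ((hP i x1 hx1.1 (b i) (hb i)).mpr (Or.inr rfl))
        ((hP j x2 hx2.1 (b j) (hb j)).mpr (Or.inr rfl))
        ((hP k (a k) (ha k) y3 hy3F).mpr (Or.inl rfl))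
    exact ⟨keyA, keyB⟩
  intro i j a' ha' b' hb'
  rw [hP i a' ha' b' hb', hP j a' ha' b' hb', (key i j).1, (key i j).2]
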